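/- Let H ⊆ E be a set of arcs such that every oriented cycle γ of G supported on H has zero cost, ∑_e γ_e ℓ_e = 0. Let σ ∈ ℝ^E be a positive flow (Bσ = b, σ ≥ 0) with supp σ ⊆ H. Then there exists a potential p ∈ ℝ^V(H) (on the vertices incident to H) with (p_i − p_j)/ℓ_{ij} = 1 for every arc ij ∈ H, and every such p satisfies Kirchhoff's equation L(σ)p = b on V(H). -/

import Mathlib

open scoped BigOperators

section PhysarumSetup

variable {V E : Type*} [Fintype V] [Fintype E] [DecidableEq V] [DecidableEq E]

/-- Incidence (boundary) matrix of the digraph given by `tail`/`head`: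
`+1` if `i` is the tail of `e`, `-1` if `i` is the head of `e`, `0` otherwise. -/
def incMatrix (tail head : E → V) : Matrix V E ℝ :=
  Matrix.of fun i e => if tail e = i then (1 : ℝ) else if head e = i then -1 else 0

/-- The digraph has no loops. -/
def NoLoops (tail head : E → V) : Prop := ∀ e, tail e ≠ head e

/-- The digraph has no multiple arcs. -/
def NoMultiple (tail head : E → V) : Prop :=
  ∀ e f, tail e = tail f → head e = head f → e = f

/-- Adjacency in the underlying undirected graph. -/
def Adj (tail head : E → V) (i j : V) : Prop :=
  ∃ e, (tail e = i ∧ head e = j) ∨ (tail e = j ∧ head e = i)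

/-- The underlying undirected graph is connected. -/
def IsConnectedGraph (tail head : E → V) : Prop :=
  ∀ i j : V, Relation.ReflTransGen (Adj tail head) i j

/-- `φ` is a flow with source vector `b`: `Bφ = b`. -/
def IsFlow (tail head : E → V) (b : V → ℝ) (φ : E → ℝ) : Prop :=
  (incMatrix tail head).mulVec φ = b

/-- Net supply `b(S)` of a vertex set `S`. -/
def netSupply (b : V → ℝ) (S : Finset V) : ℝ := ∑ i ∈ S, b i

/-- `b*_max = max_{S ⊆ V} |b(S)|`. -/
noncomputable def bstarMax (b : V → ℝ) : ℝ :=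
  sSup {x | ∃ S : Finset V, x = |netSupply b S|}

/-- `b*_min = min { |b(S)| : S ⊆ V, b(S) ≠ 0 }`. -/
noncomputable def bstarMin (b : V → ℝ) : ℝ :=
  sInf {x | ∃ S : Finset V, netSupply b S ≠ 0 ∧ x = |netSupply b S|}

/-- The support of an arc vector. -/
def suppE (φ : E → ℝ) : Set E := {e | φ e ≠ 0}

/-- An arc set is a forest in the underlying undirected graph:
equivalently, it supports no nonzero circulation. -/
def ForestSupport (tail head : E → V) (s : Set E) : Prop :=
  ∀ γ : E → ℝ, (incMatrix tail head).mulVec γ = 0 → (∀ e, γ e ≠ 0 → e ∈ s) → γ = 0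

/-- A basic feasible solution: a positive flow whose support is a forest
in the underlying undirected graph. -/
def IsBFS (tail head : E → V) (b : V → ℝ) (f : E → ℝ) : Prop :=
  IsFlow tail head b f ∧ (∀ e, 0 ≤ f e) ∧ ForestSupport tail head (suppE f)

/-- A vector is circulation free if its support contains no directed cycle:
equivalently, it supports no nonzero nonnegative circulation. -/
def CirculationFree (tail head : E → V) (φ : E → ℝ) : Prop :=
  ∀ γ : E → ℝ, (incMatrix tail head).mulVec γ = 0 → (∀ e, 0 ≤ γ e) →
    (∀ e, γ e ≠ 0 → φ e ≠ 0) → γ = 0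

/-- The weighted graph Laplacian `L(σ) = B · diag(σ/ℓ) · Bᵀ`. -/
noncomputable def lap (tail head : E → V) (ℓ σ : E → ℝ) : Matrix V V ℝ :=
  incMatrix tail head * Matrix.diagonal (fun e => σ e / ℓ e) * (incMatrix tail head).transpose

/-- The field (slope) of a potential: `Ψ(p)_{ij} = (p_i - p_j)/ℓ_{ij}`. -/
noncomputable def field (tail head : E → V) (ℓ : E → ℝ) (p : V → ℝ) : E → ℝ :=
  fun e => (p (tail e) - p (head e)) / ℓ e

/-- The set of vertices incident to an arc set `H`. -/
def VSet (tail head : E → V) (H : Set E) : Set V :=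
  {i | ∃ e ∈ H, tail e = i ∨ head e = i}

/-- Undirected reachability using only arcs in `H`. -/
def UReach (tail head : E → V) (H : Set E) : V → V → Prop :=
  Relation.ReflTransGen
    (fun i j => ∃ e ∈ H, (tail e = i ∧ head e = j) ∨ (tail e = j ∧ head e = i))

/-- `WalkLen tail head ℓ H i j L`: there is a walk in the underlying undirected
graph of `H` from `i` to `j` of total `ℓ`-length `L`. -/
inductive WalkLen (tail head : E → V) (ℓ : E → ℝ) (H : Set E) : V → V → ℝ → Prop
  | refl (i : V) : WalkLen tail head ℓ H i i 0
  | step {j k : V} {L : ℝ} (i : V) (e : E) (he : e ∈ H)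
      (hik : (tail e = i ∧ head e = j) ∨ (tail e = j ∧ head e = i))
      (hw : WalkLen tail head ℓ H j k L) : WalkLen tail head ℓ H i k (ℓ e + L)

/-- The minimal `ℓ`-length of a connecting walk within `H`. -/
noncomputable def wdist (tail head : E → V) (ℓ : E → ℝ) (H : Set E) (i j : V) : ℝ :=
  sInf {L | WalkLen tail head ℓ H i j L}

/-- The `ℓ`-diameter of `H`: the maximum of `wdist` over pairs of vertices lying in
a common component of `H`. -/
noncomputable def wdiam (tail head : E → V) (ℓ : E → ℝ) (H : Set E) : ℝ :=
  sSup {x | ∃ i j : V, (∃ L, WalkLen tail head ℓ H i j L) ∧ x = wdist tail head ℓ H i j}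

/-- Maximum norm of `p` restricted to a vertex set `A`. -/
noncomputable def supNormOn (A : Set V) (p : V → ℝ) : ℝ := sSup {x | ∃ i ∈ A, x = |p i|}

/-- Maximum norm of an arc vector. -/
noncomputable def eSupNorm (x : E → ℝ) : ℝ := sSup {r | ∃ e : E, r = |x e|}

/-- `min { σ_e : σ_e > 0 }`. -/
noncomputable def minPos (σ : E → ℝ) : ℝ := sInf {x | ∃ e, 0 < σ e ∧ x = σ e}

/-- `min_e ℓ_e`. -/
noncomputable def minLen (ℓ : E → ℝ) : ℝ := sInf {x | ∃ e : E, x = ℓ e}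

/-- The cost `ℓᵀφ` of a flow. -/
def cost (ℓ φ : E → ℝ) : ℝ := ∑ e, ℓ e * φ e

/-- The transshipment problem is feasible: there is a positive flow. -/
def Feasible (tail head : E → V) (b : V → ℝ) : Prop :=
  ∃ φ : E → ℝ, IsFlow tail head b φ ∧ ∀ e, 0 ≤ φ e

/-- `φ` is a minimum-cost positive flow. -/
def IsOptimal (tail head : E → V) (ℓ : E → ℝ) (b : V → ℝ) (φ : E → ℝ) : Prop :=
  IsFlow tail head b φ ∧ (∀ e, 0 ≤ φ e) ∧
    ∀ ψ : E → ℝ, IsFlow tail head b ψ → (∀ e, 0 ≤ ψ e) → cost ℓ φ ≤ cost ℓ ψ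

/-- `Ĥ`: the set of arcs carried by some minimum-cost positive flow. -/
def optSupport (tail head : E → V) (ℓ : E → ℝ) (b : V → ℝ) : Set E :=
  {e | ∃ φ : E → ℝ, IsOptimal tail head ℓ b φ ∧ 0 < φ e}

/-- The current `φ(t) = σ(t)·Ψ(p(t))` of the Physarum solver. -/
noncomputable def current (tail head : E → V) (ℓ : E → ℝ) (σ : ℝ → E → ℝ)
    (p : ℝ → V → ℝ) (t : ℝ) : E → ℝ :=
  fun e => σ t e * field tail head ℓ (p t) e

/-- The Physarum dynamics: `σ(t) > 0` and continuously differentiable on `[0,∞)`,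
`L(σ(t)) p(t) = b`, and `σ' = φ - σ` where `φ(t) = σ(t)·Ψ(p(t))`. -/
structure PhysarumDynamics (tail head : E → V) (ℓ : E → ℝ) (b : V → ℝ)
    (σ : ℝ → E → ℝ) (p : ℝ → V → ℝ) : Prop where
  pos : ∀ t : ℝ, 0 ≤ t → ∀ e, 0 < σ t e
  kirchhoff : ∀ t : ℝ, 0 ≤ t → (lap tail head ℓ (σ t)).mulVec (p t) = b
  contp : ContinuousOn (fun t => p t) (Set.Ici (0 : ℝ))
  dyn : ∀ t ∈ Set.Ici (0 : ℝ), ∀ e : E,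
    HasDerivWithinAt (fun s => σ s e)
      (current tail head ℓ σ p t e - σ t e) (Set.Ici (0 : ℝ)) t

/-- A directed walk from `i` to `j` using the listed arcs in order. -/
inductive DiWalk (tail head : E → V) : V → V → List E → Prop
  | nil (i : V) : DiWalk tail head i i []
  | cons {j k : V} {es : List E} (i : V) (e : E) (h1 : tail e = i) (h2 : head e = j)
      (hw : DiWalk tail head j k es) : DiWalk tail head i k (e :: es)

/-- Discrete `∞`-harmonicity of `p` at node `i` with respect to the arc set `H`:
the maximal in-slope equals the maximal out-slope, and both are nonnegative. -/
noncomputable def InfHarmAt (tail head : E → V) (ℓ : E → ℝ) (H : Set E)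
    (p : V → ℝ) (i : V) : Prop :=
  sSup {r | ∃ e ∈ H, head e = i ∧ r = (p (tail e) - p i) / ℓ e}
    = sSup {r | ∃ e ∈ H, tail e = i ∧ r = (p i - p (head e)) / ℓ e}
  ∧ 0 ≤ sSup {r | ∃ e ∈ H, tail e = i ∧ r = (p i - p (head e)) / ℓ e}

end PhysarumSetup

/-!
A potential with unit field on `H` is one whose drop along every arc of `H` is its length. It is
built by adding the arcs of `H` one at a time. An arc joining two components of the arcs already
placed is accommodated by shifting the potential on one component. An arc `e₀` whose endpoints are
already joined by a simple path closes a cycle: the signed arc vector of the path minus the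
indicator of `e₀` is a `{0, ±1}`-circulation supported on `H`, so it has zero cost, while summation
by parts (`∑ γₑ ℓₑ = Bγ ⬝ᵥ p`) shows that the cost of the path is the potential drop between its
ends, which is therefore `ℓ e₀`.

Kirchhoff's equation is `L(σ) p = B (σ ⊙ Ψ(p)) = B σ = b`, since `Ψ(p) = 1` on the support of `σ`.
-/

open Matrix

section Potentials

variable {V E : Type*} {tail head : E → V} {ℓ : E → ℝ} {H : Set E}

def arcGraph (tail head : E → V) (H : Set E) : SimpleGraph V :=
  SimpleGraph.fromRel fun i j => ∃ e ∈ H, tail e = i ∧ head e = j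

theorem arcGraph_reachable {e : E} (he : e ∈ H) :
    (arcGraph tail head H).Reachable (tail e) (head e) := by
  by_cases h : tail e = head e
  · rw [h]
  · exact SimpleGraph.Adj.reachable ((SimpleGraph.fromRel_adj _ _ _).2 ⟨h, .inl ⟨e, he, rfl, rfl⟩⟩)

theorem incMatrix_apply_of_noLoops [DecidableEq V] (hloops : NoLoops tail head) (i : V) (e : E) :
    incMatrix tail head i e = (Pi.single (tail e) 1 - Pi.single (head e) 1 : V → ℝ) i := by
  have hne := hloops e
  rcases eq_or_ne (tail e) i with rfl | ht
  · simp [incMatrix, hne.symm]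
  rcases eq_or_ne (head e) i with rfl | hh
  · simp [incMatrix, hne]
  · simp [incMatrix, ht, hh, ht.symm, hh.symm]

theorem incMatrix_mulVec_single [DecidableEq V] [Fintype E] [DecidableEq E]
    (hloops : NoLoops tail head) (e : E) :
    incMatrix tail head *ᵥ Pi.single e 1 = Pi.single (tail e) 1 - Pi.single (head e) 1 := by
  ext i
  simp [incMatrix_apply_of_noLoops hloops]

theorem incMatrix_transpose_mulVec [Fintype V] [DecidableEq V] (hloops : NoLoops tail head)
    (p : V → ℝ) : (incMatrix tail head)ᵀ *ᵥ p = fun e => p (tail e) - p (head e) := by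
  ext e
  simp [mulVec, dotProduct, incMatrix_apply_of_noLoops hloops, Pi.single_apply, sub_mul,
    Finset.sum_sub_distrib]

theorem sum_mul_eq_incMatrix_mulVec_dotProduct [Fintype V] [DecidableEq V] [Fintype E]
    (hloops : NoLoops tail head) {p : V → ℝ} {γ : E → ℝ}
    (hp : ∀ e, γ e ≠ 0 → p (tail e) - p (head e) = ℓ e) :
    ∑ e, γ e * ℓ e = (incMatrix tail head *ᵥ γ) ⬝ᵥ p := by
  rw [← vecMul_transpose, ← dotProduct_mulVec, incMatrix_transpose_mulVec hloops]
  refine Finset.sum_congr rfl fun e _ => ?_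
  by_cases h : γ e = 0 <;> simp [h, hp]

theorem exists_signed_vector_of_isPath [DecidableEq V] [Fintype E] [DecidableEq E]
    (hloops : NoLoops tail head) {u v : V} (q : (arcGraph tail head H).Walk u v)
    (hq : q.IsPath) :
    ∃ γ : E → ℝ, (∀ e, γ e = 0 ∨ γ e = 1 ∨ γ e = -1) ∧
      (∀ e, γ e ≠ 0 → e ∈ H ∧ tail e ∈ q.support ∧ head e ∈ q.support) ∧
      incMatrix tail head *ᵥ γ = Pi.single u 1 - Pi.single v 1 := by
  induction q with
  | nil => exact ⟨0, by simp, by simp, by simp⟩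
  | @cons u w v hadj q ih =>
    rw [SimpleGraph.Walk.cons_isPath_iff] at hq
    obtain ⟨γ, hsign, hsupp, hflow⟩ := ih hq.1
    obtain ⟨e, he, s, hs, hends, hδ⟩ : ∃ e ∈ H, ∃ s : ℝ, (s = 1 ∨ s = -1) ∧
        (tail e = u ∧ head e = w ∨ tail e = w ∧ head e = u) ∧
        s • (Pi.single (tail e) 1 - Pi.single (head e) 1 : V → ℝ) =
          Pi.single u 1 - Pi.single w 1 := by
      obtain ⟨-, ⟨e, he, rfl, rfl⟩ | ⟨e, he, rfl, rfl⟩⟩ := (SimpleGraph.fromRel_adj _ _ _).1 hadj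
      · exact ⟨e, he, 1, .inl rfl, .inl ⟨rfl, rfl⟩, one_smul _ _⟩
      · exact ⟨e, he, -1, .inr rfl, .inr ⟨rfl, rfl⟩, by simp⟩
    have hγe : γ e = 0 := by
      by_contra h
      rcases hends with ⟨ht, -⟩ | ⟨-, hh⟩
      · exact hq.2 (ht ▸ (hsupp e h).2.1)
      · exact hq.2 (hh ▸ (hsupp e h).2.2)
    refine ⟨γ + s • Pi.single e 1, fun f => ?_, fun f hf => ?_, ?_⟩
    · by_cases hf : f = e
      · subst hf
        rcases hs with rfl | rfl <;> simp [hγe]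
      · simpa [hf] using hsign f
    · by_cases hfe : f = e
      · subst hfe
        have hw := q.start_mem_support
        rcases hends with ⟨ht, hh⟩ | ⟨ht, hh⟩ <;> simp [he, ht, hh, hw]
      · have := hsupp f (by simpa [hfe] using hf)
        simp [this]
    · rw [mulVec_add, hflow, mulVec_smul, incMatrix_mulVec_single hloops, hδ]
      abel

def ZeroCycleCost [DecidableEq V] [Fintype E] (tail head : E → V) (ℓ : E → ℝ) (H : Set E) :
    Prop :=
  ∀ γ : E → ℝ, incMatrix tail head *ᵥ γ = 0 → (∀ e, γ e = 0 ∨ γ e = 1 ∨ γ e = -1) →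
    (∀ e, γ e ≠ 0 → e ∈ H) → ∑ e, γ e * ℓ e = 0

theorem ZeroCycleCost.mono [DecidableEq V] [Fintype E] {H' : Set E}
    (h : ZeroCycleCost tail head ℓ H) (hH : H' ⊆ H) : ZeroCycleCost tail head ℓ H' :=
  fun γ hγ hsign hsupp => h γ hγ hsign fun e he => hH (hsupp e he)

theorem ZeroCycleCost.potential_sub_eq_of_reachable [Fintype V] [DecidableEq V] [Fintype E]
    [DecidableEq E] (hloops : NoLoops tail head) {e₀ : E}
    (h : ZeroCycleCost tail head ℓ (insert e₀ H)) (he₀ : e₀ ∉ H) {p : V → ℝ}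
    (hp : ∀ e ∈ H, p (tail e) - p (head e) = ℓ e)
    (hreach : (arcGraph tail head H).Reachable (tail e₀) (head e₀)) :
    p (tail e₀) - p (head e₀) = ℓ e₀ := by
  obtain ⟨q, hq⟩ := hreach.exists_isPath
  obtain ⟨γ, hsign, hsupp, hflow⟩ := exists_signed_vector_of_isPath hloops q hq
  have hγe₀ : γ e₀ = 0 := by
    by_contra hne
    exact he₀ (hsupp e₀ hne).1
  have hcycle : incMatrix tail head *ᵥ (γ - Pi.single e₀ 1) = 0 := by
    rw [mulVec_sub, hflow, incMatrix_mulVec_single hloops, sub_self]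
  have hcost := h _ hcycle
    (fun e => by by_cases he : e = e₀ <;> simp [he, hγe₀, hsign e])
    (fun e he => by
      by_cases he' : e = e₀
      · exact he' ▸ Set.mem_insert _ _
      · exact Set.mem_insert_of_mem _ (hsupp e (by simpa [he'] using he)).1)
  have hpath := sum_mul_eq_incMatrix_mulVec_dotProduct hloops fun e he => hp e (hsupp e he).1
  simp only [Pi.sub_apply, sub_mul, Finset.sum_sub_distrib, Pi.single_apply, ite_mul, one_mul,
    zero_mul, Finset.sum_ite_eq', Finset.mem_univ, if_true] at hcost
  simp only [hflow, sub_dotProduct, single_dotProduct, one_mul] at hpath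
  linarith

theorem exists_potential_insert_of_not_reachable {e₀ : E} {p : V → ℝ}
    (hp : ∀ e ∈ H, p (tail e) - p (head e) = ℓ e)
    (hreach : ¬ (arcGraph tail head H).Reachable (tail e₀) (head e₀)) :
    ∃ p' : V → ℝ, ∀ e ∈ insert e₀ H, p' (tail e) - p' (head e) = ℓ e := by
  classical
  set c := ℓ e₀ - (p (tail e₀) - p (head e₀))
  refine ⟨fun i => p i + if (arcGraph tail head H).Reachable (tail e₀) i then c else 0,
    Set.forall_mem_insert.2 ⟨?_, fun e he => ?_⟩⟩
  · simp only [SimpleGraph.Reachable.refl, if_true, hreach, if_false]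
    ring
  · have hiff : (arcGraph tail head H).Reachable (tail e₀) (tail e) ↔
        (arcGraph tail head H).Reachable (tail e₀) (head e) :=
      ⟨fun h => h.trans (arcGraph_reachable he), fun h => h.trans (arcGraph_reachable he).symm⟩
    simp only [hiff]
    have := hp e he
    split_ifs <;> linarith

theorem ZeroCycleCost.exists_potential [Fintype V] [DecidableEq V] [Fintype E] [DecidableEq E]
    (hloops : NoLoops tail head) (h : ZeroCycleCost tail head ℓ H) :
    ∃ p : V → ℝ, ∀ e ∈ H, p (tail e) - p (head e) = ℓ e := by
  induction H, H.toFinite using Set.Finite.induction_on with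
  | empty => exact ⟨0, by simp⟩
  | @insert e₀ H he₀ _ ih =>
    obtain ⟨p, hp⟩ := ih (h.mono (Set.subset_insert _ _))
    by_cases hreach : (arcGraph tail head H).Reachable (tail e₀) (head e₀)
    · exact ⟨p, Set.forall_mem_insert.2 ⟨h.potential_sub_eq_of_reachable hloops he₀ hp hreach, hp⟩⟩
    · exact exists_potential_insert_of_not_reachable hp hreach

theorem lap_mulVec_eq_of_field_eq_one [Fintype V] [DecidableEq V] [Fintype E] [DecidableEq E]
    (hloops : NoLoops tail head) {b : V → ℝ} {σ : E → ℝ} (hσ : IsFlow tail head b σ)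
    {p : V → ℝ} (hp : ∀ e, σ e ≠ 0 → field tail head ℓ p e = 1) :
    lap tail head ℓ σ *ᵥ p = b := by
  have hcurrent : diagonal (fun e => σ e / ℓ e) *ᵥ ((incMatrix tail head)ᵀ *ᵥ p) = σ := by
    ext e
    rw [incMatrix_transpose_mulVec hloops, mulVec_diagonal, div_mul_eq_mul_div, mul_div_assoc]
    by_cases hσe : σ e = 0
    · simp [hσe]
    · rw [← field, hp e hσe, mul_one]
  rw [lap, ← mulVec_mulVec, ← mulVec_mulVec, hcurrent]
  exact hσ

end Potentials

theorem statement_4_general {V E : Type*} [Fintype V] [Fintype E] [DecidableEq V] [DecidableEq E]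
    (tail head : E → V)
    (hloops : NoLoops tail head)
    (ℓ : E → ℝ) (hℓ : ∀ e, 0 < ℓ e)
    (b : V → ℝ)
    (H : Set E)
    (hzero : ∀ γ : E → ℝ, (incMatrix tail head).mulVec γ = 0 →
      (∀ e, γ e = 0 ∨ γ e = 1 ∨ γ e = -1) →
      (∀ e, γ e ≠ 0 → e ∈ H) → ∑ e, γ e * ℓ e = 0)
    (σ : E → ℝ) (hσflow : IsFlow tail head b σ)
    (hσsupp : ∀ e, σ e ≠ 0 → e ∈ H) :
    (∃ p : V → ℝ, ∀ e ∈ H, field tail head ℓ p e = 1) ∧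
      ∀ p : V → ℝ, (∀ e ∈ H, field tail head ℓ p e = 1) →
        ∀ i ∈ VSet tail head H, (lap tail head ℓ σ).mulVec p i = b i := by
  have hcycles : ZeroCycleCost tail head ℓ H := hzero
  obtain ⟨p, hp⟩ := hcycles.exists_potential hloops
  refine ⟨⟨p, fun e he => (div_eq_one_iff_eq (hℓ e).ne').2 (hp e he)⟩, fun p' hp' i _ => ?_⟩
  exact congrFun (lap_mulVec_eq_of_field_eq_one hloops hσflow fun e he => hp' e (hσsupp e he)) i

theorem statement_4 {V E : Type*} [Fintype V] [Fintype E] [DecidableEq V] [DecidableEq E]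
    (tail head : E → V)
    (hloops : NoLoops tail head) (hmult : NoMultiple tail head)
    (hconn : IsConnectedGraph tail head)
    (ℓ : E → ℝ) (hℓ : ∀ e, 0 < ℓ e)
    (b : V → ℝ) (hb : ∑ i, b i = 0)
    (H : Set E)
    (hzero : ∀ γ : E → ℝ, (incMatrix tail head).mulVec γ = 0 →
      (∀ e, γ e = 0 ∨ γ e = 1 ∨ γ e = -1) →
      (∀ e, γ e ≠ 0 → e ∈ H) → ∑ e, γ e * ℓ e = 0)
    (σ : E → ℝ) (hσflow : IsFlow tail head b σ) (hσpos : ∀ e, 0 ≤ σ e)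
    (hσsupp : ∀ e, σ e ≠ 0 → e ∈ H) :
    (∃ p : V → ℝ, ∀ e ∈ H, field tail head ℓ p e = 1) ∧
      ∀ p : V → ℝ, (∀ e ∈ H, field tail head ℓ p e = 1) →
        ∀ i ∈ VSet tail head H, (lap tail head ℓ σ).mulVec p i = b i :=
  statement_4_general tail head hloops ℓ hℓ b H hzero σ hσflow hσsupp
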